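/- Let E be a finite-dimensional real inner product space and let T, T' : E → E be symmetric linear operators such that ⟪T v, v⟫ < ⟪T' v, v⟫ for every v ∈ E with v ≠ 0. For j a natural number with j + 1 ≤ dim E, define μ_j(T) = inf over all subspaces V ⊆ E with dim V = j + 1 of sup over v ∈ V \ {0} of ⟪T v, v⟫ / ⟪v, v⟫. Then μ_j(T) < μ_j(T'). -/
import Mathlib


open scoped RealInnerProductSpace

/-- The `j`-th min–max value of a linear operator `T` on a real inner product space:
`μ_j(T) = inf` over subspaces `V` of dimension `j+1` of
`sup` over nonzero `v ∈ V` of the Rayleigh quotient `⟪T v, v⟫ / ⟪v, v⟫`. -/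
noncomputable def minMaxValue {E : Type*} [NormedAddCommGroup E] [InnerProductSpace ℝ E]
    (T : E →ₗ[ℝ] E) (j : ℕ) : ℝ :=
  sInf {s : ℝ | ∃ V : Submodule ℝ E, Module.finrank ℝ V = j + 1 ∧
    s = sSup {r : ℝ | ∃ v : E, v ∈ V ∧ v ≠ 0 ∧ r = ⟪T v, v⟫ / ⟪v, v⟫}}

private lemma rayleigh_abs_le {E : Type*} [NormedAddCommGroup E] [InnerProductSpace ℝ E]
    [FiniteDimensional ℝ E] (T : E →ₗ[ℝ] E) (v : E) (hv : v ≠ 0) :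
    |⟪T v, v⟫ / ⟪v, v⟫| ≤ ‖(LinearMap.toContinuousLinearMap T : E →L[ℝ] E)‖ := by
  have hv' : (0:ℝ) < ‖v‖ := norm_pos_iff.mpr hv
  rw [real_inner_self_eq_norm_sq, abs_div, abs_of_pos (by positivity : (0:ℝ) < ‖v‖ ^ 2),
    div_le_iff₀ (by positivity)]
  calc |⟪T v, v⟫| ≤ ‖T v‖ * ‖v‖ := abs_real_inner_le_norm _ _
    _ ≤ ‖(LinearMap.toContinuousLinearMap T : E →L[ℝ] E)‖ * ‖v‖ * ‖v‖ := by
        gcongr; exact (LinearMap.toContinuousLinearMap T).le_opNorm v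
    _ = ‖(LinearMap.toContinuousLinearMap T : E →L[ℝ] E)‖ * ‖v‖ ^ 2 := by ring

/-- strict monotonicity of the min–max values: if `T, T'` are symmetric
operators on a finite-dimensional real inner product space with `⟪T v, v⟫ < ⟪T' v, v⟫`
for all `v ≠ 0`, then `μ_j(T) < μ_j(T')` whenever `j + 1 ≤ dim E`. -/
theorem minMaxValue_strictMono {E : Type*} [NormedAddCommGroup E] [InnerProductSpace ℝ E]
    [FiniteDimensional ℝ E]
    (T T' : E →ₗ[ℝ] E) (hT : T.IsSymmetric) (hT' : T'.IsSymmetric)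
    (h : ∀ v : E, v ≠ 0 → ⟪T v, v⟫ < ⟪T' v, v⟫)
    (j : ℕ) (hj : j + 1 ≤ Module.finrank ℝ E) :
    minMaxValue T j < minMaxValue T' j := by
  classical
  -- notation for the inner sets
  set S : (E →ₗ[ℝ] E) → Submodule ℝ E → Set ℝ :=
    fun U V => {r : ℝ | ∃ v : E, v ∈ V ∧ v ≠ 0 ∧ r = ⟪U v, v⟫ / ⟪v, v⟫} with hS
  set A : (E →ₗ[ℝ] E) → Set ℝ :=
    fun U => {s : ℝ | ∃ V : Submodule ℝ E, Module.finrank ℝ V = j + 1 ∧ s = sSup (S U V)}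
    with hA
  have hmm : ∀ U : E →ₗ[ℝ] E, minMaxValue U j = sInf (A U) := fun U => rfl
  -- nontriviality
  have hpos : 0 < Module.finrank ℝ E := lt_of_lt_of_le (Nat.succ_pos j) hj
  have hnt : Nontrivial E := Module.finrank_pos_iff.mp hpos
  -- the gap ε
  have hf : Continuous fun v : E => ⟪(T' - T) v, v⟫ :=
    Continuous.inner (T' - T).continuous_of_finiteDimensional continuous_id
  obtain ⟨v₀, hv₀s, hmin⟩ := (isCompact_sphere (0:E) 1).exists_isMinOn
    (NormedSpace.sphere_nonempty.mpr zero_le_one) hf.continuousOn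
  have hv₀ : ‖v₀‖ = 1 := by simpa using mem_sphere_zero_iff_norm.mp hv₀s
  have hv₀ne : v₀ ≠ 0 := by intro hh; rw [hh, norm_zero] at hv₀; norm_num at hv₀
  set ε : ℝ := ⟪(T' - T) v₀, v₀⟫ with hε
  have hεpos : 0 < ε := by
    have := h v₀ hv₀ne
    simp only [hε, LinearMap.sub_apply, inner_sub_left]
    linarith
  -- key pointwise inequality
  have key : ∀ v : E, v ≠ 0 → ⟪T v, v⟫ / ⟪v, v⟫ + ε ≤ ⟪T' v, v⟫ / ⟪v, v⟫ := by
    intro v hv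
    have hnv : (0:ℝ) < ‖v‖ := norm_pos_iff.mpr hv
    have hw : (‖v‖⁻¹ • v) ∈ Metric.sphere (0:E) 1 := by
      rw [mem_sphere_zero_iff_norm, norm_smul, norm_inv, norm_norm,
        inv_mul_cancel₀ hnv.ne']
    have h1 : ε ≤ ⟪(T' - T) (‖v‖⁻¹ • v), ‖v‖⁻¹ • v⟫ := hmin hw
    have h2 : ⟪(T' - T) (‖v‖⁻¹ • v), ‖v‖⁻¹ • v⟫
        = ‖v‖⁻¹ * (‖v‖⁻¹ * ⟪(T' - T) v, v⟫) := by
      rw [map_smul, real_inner_smul_left, real_inner_smul_right]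
    have h3 : ⟪(T' - T) v, v⟫ = ⟪T' v, v⟫ - ⟪T v, v⟫ := by
      simp [LinearMap.sub_apply, inner_sub_left]
    have h4 : ⟪v, v⟫ = ‖v‖ * ‖v‖ := by
      rw [real_inner_self_eq_norm_sq]; ring
    rw [h2, h3] at h1
    rw [h4, div_add' _ _ _ (by positivity), div_le_div_iff₀ (by positivity) (by positivity)]
    have hinv : ‖v‖⁻¹ * (‖v‖⁻¹ * (⟪T' v, v⟫ - ⟪T v, v⟫))
        = (⟪T' v, v⟫ - ⟪T v, v⟫) / (‖v‖ * ‖v‖) := by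
      field_simp
    rw [hinv, le_div_iff₀ (by positivity)] at h1
    nlinarith
  -- basic facts about the sets S U V
  have hSne : ∀ (U : E →ₗ[ℝ] E) (V : Submodule ℝ E), Module.finrank ℝ V = j + 1 →
      (S U V).Nonempty := by
    intro U V hV
    have hVne : V ≠ ⊥ := by
      intro hh
      rw [hh, finrank_bot] at hV
      omega
    obtain ⟨v, hvV, hv⟩ := Submodule.exists_mem_ne_zero_of_ne_bot hVne
    exact ⟨_, v, hvV, hv, rfl⟩
  have hSbdd : ∀ (U : E →ₗ[ℝ] E) (V : Submodule ℝ E), BddAbove (S U V) := by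
    intro U V
    refine ⟨‖(LinearMap.toContinuousLinearMap U : E →L[ℝ] E)‖, ?_⟩
    rintro r ⟨v, hvV, hv, rfl⟩
    exact le_trans (le_abs_self _) (rayleigh_abs_le U v hv)
  -- A U is bounded below
  have hAbdd : ∀ U : E →ₗ[ℝ] E, BddBelow (A U) := by
    intro U
    refine ⟨-‖(LinearMap.toContinuousLinearMap U : E →L[ℝ] E)‖, ?_⟩
    rintro s ⟨V, hV, rfl⟩
    obtain ⟨r, v, hvV, hv, rfl⟩ := hSne U V hV
    refine le_trans ?_ (le_csSup (hSbdd U V) ⟨v, hvV, hv, rfl⟩)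
    exact neg_le_of_abs_le (rayleigh_abs_le U v hv)
  -- A T' is nonempty
  have hAne : ∀ U : E →ₗ[ℝ] E, (A U).Nonempty := by
    intro U
    have b := Module.finBasis ℝ E
    refine ⟨_, Submodule.span ℝ (Set.range (b ∘ Fin.castLE hj)), ?_, rfl⟩
    rw [finrank_span_eq_card (b.linearIndependent.comp _ (Fin.castLE_injective hj))]
    simp
  -- the sup comparison on each V
  have hsup : ∀ V : Submodule ℝ E, Module.finrank ℝ V = j + 1 →
      sSup (S T V) + ε ≤ sSup (S T' V) := by
    intro V hV
    rw [← le_sub_iff_add_le]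
    refine csSup_le (hSne T V hV) ?_
    rintro r ⟨v, hvV, hv, rfl⟩
    rw [le_sub_iff_add_le]
    exact le_trans (key v hv) (le_csSup (hSbdd T' V) ⟨v, hvV, hv, rfl⟩)
  -- conclude
  rw [hmm, hmm]
  have : sInf (A T) + ε ≤ sInf (A T') := by
    refine le_csInf (hAne T') ?_
    rintro s ⟨V, hV, rfl⟩
    calc sInf (A T) + ε ≤ sSup (S T V) + ε := by
          have := csInf_le (hAbdd T) (show sSup (S T V) ∈ A T from ⟨V, hV, rfl⟩)
          linarith
      _ ≤ sSup (S T' V) := hsup V hV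
  linarith
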